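/- arXiv:2007.09618 — 2 statements merged into one kernel-verified Lean document; each statement's English description precedes it below -/
import Mathlib

section
/- An orientation D of an undirected graph G=(V,E) has a decreasingly minimal in-degree vector (among all orientations of G) if and only if there is no directed path in D from a node s to a node t with ρ_D(t) ≥ ρ_D(s) + 2. -/
open Finset

/-- Head of edge `e` under orientation `o` (an orientation picks, for each edge,
one of its two end-nodes as head). -/
def ohead {V E : Type*} (ends : E → V × V) (o : E → Bool) (e : E) : V :=
  if o e then (ends e).1 else (ends e).2

/-- Tail of edge `e` under orientation `o`. -/
def otail {V E : Type*} (ends : E → V × V) (o : E → Bool) (e : E) : V :=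
  if o e then (ends e).2 else (ends e).1

/-- In-degree of node `v` in the orientation `o` of the graph. -/
def indeg {V E : Type*} [Fintype E] [DecidableEq V] (ends : E → V × V) (o : E → Bool)
    (v : V) : ℕ :=
  (Finset.univ.filter fun e => ohead ends o e = v).card

/-- `e_G(X)`: number of edges with at least one end-node in `X`. -/
def eG {V E : Type*} [Fintype E] [DecidableEq V] (ends : E → V × V) (X : Finset V) : ℕ :=
  (Finset.univ.filter fun e => (ends e).1 ∈ X ∨ (ends e).2 ∈ X).card

/-- `i_G(X)`: number of edges induced by `X` (both end-nodes in `X`). -/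
def iG {V E : Type*} [Fintype E] [DecidableEq V] (ends : E → V × V) (X : Finset V) : ℕ :=
  (Finset.univ.filter fun e => (ends e).1 ∈ X ∧ (ends e).2 ∈ X).card

/-- `ρ_D(X)`: number of arcs entering `X` (head in `X`, tail outside). -/
def inCut {V E : Type*} [Fintype E] [DecidableEq V] (ends : E → V × V) (o : E → Bool)
    (X : Finset V) : ℕ :=
  (Finset.univ.filter fun e => ohead ends o e ∈ X ∧ otail ends o e ∉ X).card

/-- `d_G(X)`: number of edges with exactly one end-node in `X`. -/
def dG {V E : Type*} [Fintype E] [DecidableEq V] (ends : E → V × V) (X : Finset V) : ℕ :=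
  (Finset.univ.filter fun e =>
    ((ends e).1 ∈ X ∧ (ends e).2 ∉ X) ∨ ((ends e).2 ∈ X ∧ (ends e).1 ∉ X)).card

/-- `Reach ends o s t`: there is a directed path from `s` to `t` in the orientation `o`. -/
def Reach {V E : Type*} (ends : E → V × V) (o : E → Bool) : V → V → Prop :=
  Relation.ReflTransGen fun u v => ∃ e, otail ends o e = u ∧ ohead ends o e = v

/-- `IsDipath ends o s t P`: the list of edges `P` forms a directed walk from `s` to `t`. -/
def IsDipath {V E : Type*} (ends : E → V × V) (o : E → Bool) : V → V → List E → Prop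
  | s, t, [] => s = t
  | s, t, e :: P => otail ends o e = s ∧ IsDipath ends o (ohead ends o e) t P

/-- The components of `m` sorted in decreasing order. -/
def decSeq {V : Type*} [Fintype V] (m : V → ℕ) : List ℕ :=
  (Multiset.sort (Finset.univ.val.map m) (· ≤ ·)).reverse

/-- The components of `m` sorted in increasing order. -/
def incSeq {V : Type*} [Fintype V] (m : V → ℕ) : List ℕ :=
  Multiset.sort (Finset.univ.val.map m) (· ≤ ·)

/-!
Reversing a directed path from `s` to `t` raises `ρ(s)` by one, lowers `ρ(t)` by one and leaves
every other in-degree unchanged; if `ρ(t) ≥ ρ(s) + 2`, this makes the in-degree vector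
decreasingly smaller.

Conversely, decreasingly sorted vectors compare like their superlevel counts
`c ↦ #{v | c ≤ ρ(v)}` in colexicographic order. If an orientation `D'` beats `D`, there is a
threshold `c` at which `D'` has fewer nodes of in-degree `≥ c` while all higher counts agree. Let
`S` be the set of nodes from which `D` reaches a node of in-degree `≥ c`. No arc of `D` enters
`S`, so `∑_S ρ_D = i_G(S) ≤ ∑_S ρ_D'`. Without improving paths, every node of `S` has
`ρ_D ≥ c - 1`, and then the threshold comparison forces `∑_S ρ_D' < ∑_S ρ_D`.
-/

section SortedLists

lemma countP_le_eq_zero_of_pairwise_ge {a c : ℕ} {l : List ℕ}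
    (hl : (a :: l).Pairwise (· ≥ ·)) (hac : a < c) : (a :: l).countP (c ≤ ·) = 0 := by
  rw [List.countP_eq_zero]
  intro x hx
  have hxa : x ≤ a := by
    rcases List.mem_cons.mp hx with rfl | hx
    exacts [le_rfl, List.rel_of_pairwise_cons hl hx]
  simpa using hxa.trans_lt hac

lemma lex_countP_of_lt {l' l : List ℕ} (hlen : l'.length = l.length)
    (hl' : l'.Pairwise (· ≥ ·)) (hl : l.Pairwise (· ≥ ·)) (h : l' < l) :
    Pi.Lex (· > ·) (· < ·) (fun c => l'.countP (c ≤ ·)) (fun c => l.countP (c ≤ ·)) := by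
  induction h with
  | nil => simp at hlen
  | @rel a' l' a l hlt =>
    refine ⟨a, fun d hd => ?_, ?_⟩ <;> dsimp only
    · rw [countP_le_eq_zero_of_pairwise_ge hl' (hlt.trans hd),
        countP_le_eq_zero_of_pairwise_ge hl hd]
    · rw [countP_le_eq_zero_of_pairwise_ge hl' hlt, List.countP_cons]
      simp
  | cons _ ih =>
    obtain ⟨c, hgt, hc⟩ := ih (by simpa using hlen) hl'.of_cons hl.of_cons
    exact ⟨c, fun d hd => by simp [List.countP_cons, hgt d hd],
      by simpa [List.countP_cons] using hc⟩

lemma lt_iff_lex_countP {l' l : List ℕ} (hlen : l'.length = l.length)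
    (hl' : l'.Pairwise (· ≥ ·)) (hl : l.Pairwise (· ≥ ·)) :
    l' < l ↔ Pi.Lex (· > ·) (· < ·)
      (fun c => l'.countP (c ≤ ·)) (fun c => l.countP (c ≤ ·)) := by
  refine ⟨lex_countP_of_lt hlen hl' hl, fun h => ?_⟩
  by_contra hge
  rcases (not_lt.mp hge).lt_or_eq with hlt | rfl
  · exact lt_asymm (α := Colex (ℕ → ℕ)) h (lex_countP_of_lt hlen.symm hl hl' hlt)
  · exact lt_irrefl (α := Colex (ℕ → ℕ)) _ h

end SortedLists

section DecSeq

variable {V : Type*} [Fintype V]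

lemma countP_decSeq (m : V → ℕ) (c : ℕ) :
    (decSeq m).countP (c ≤ ·) = #{v | c ≤ m v} := by
  rw [decSeq, List.countP_reverse, ← Multiset.coe_countP, Multiset.sort_eq,
    Multiset.countP_map, card_def, filter_val]

lemma decSeq_lt_decSeq_iff [DecidableEq V] (m m' : V → ℕ) :
    decSeq m' < decSeq m ↔
      Pi.Lex (· > ·) (· < ·) (fun c => #{v | c ≤ m' v}) (fun c => #{v | c ≤ m v}) := by
  have hsorted (m : V → ℕ) : (decSeq m).Pairwise (· ≥ ·) := by
    simp [decSeq, List.pairwise_reverse, Multiset.pairwise_sort _ (· ≤ ·)]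
  simp only [lt_iff_lex_countP (by simp [decSeq]) (hsorted m') (hsorted m),
    countP_decSeq]

lemma decSeq_lt_of_transfer [DecidableEq V] {m m' : V → ℕ} {s t : V}
    (h : ∀ v, m' v + (if v = t then 1 else 0) = m v + (if v = s then 1 else 0))
    (hgap : m s + 2 ≤ m t) : decSeq m' < decSeq m := by
  have hst : s ≠ t := by rintro rfl; omega
  have hs : m' s = m s + 1 := by simpa [hst] using h s
  have ht : m' t + 1 = m t := by simpa [hst.symm] using h t
  have hv (v : V) (hvs : v ≠ s) (hvt : v ≠ t) : m' v = m v := by simpa [hvs, hvt] using h v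
  have hle (d : ℕ) (hd : m t ≤ d) (v : V) (hv' : d ≤ m' v) : d ≤ m v := by
    by_cases hvs : v = s
    · subst hvs; omega
    by_cases hvt : v = t
    · subst hvt; omega
    rwa [← hv v hvs hvt]
  rw [decSeq_lt_decSeq_iff]
  refine ⟨m t, fun d hd => ?_, ?_⟩ <;> dsimp only
  · refine congrArg card (filter_congr fun v _ => ⟨hle d hd.le v, fun hv' => ?_⟩)
    by_cases hvs : v = s
    · subst hvs; omega
    by_cases hvt : v = t
    · subst hvt; omega
    rwa [hv v hvs hvt]
  · refine card_lt_card ((ssubset_iff_of_subset ?_).mpr ⟨t, by simp, by simp; omega⟩)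
    exact monotone_filter_right _ fun v _ => hle (m t) le_rfl v

end DecSeq

section SuperlevelSets

variable {V : Type*} [Fintype V]

lemma sum_add_one_tsub_eq_sum_card (f : V → ℕ) {c B : ℕ} (hB : ∀ v, f v + 1 ≤ c + B) :
    ∑ v, (f v + 1 - c) = ∑ i ∈ range B, #{v | c + i ≤ f v} := by
  have hfiber (v : V) : f v + 1 - c = #{i ∈ range B | c + i ≤ f v} := by
    rw [show {i ∈ range B | c + i ≤ f v} = range (f v + 1 - c) by
      ext i; simp only [mem_filter, mem_range]; have := hB v; omega, card_range]
  simp_rw [hfiber]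
  exact sum_card_bipartiteAbove_eq_sum_card_bipartiteBelow (fun v i => c + i ≤ f v)

lemma sum_add_one_tsub_lt_of_lex {m m' : V → ℕ} {c : ℕ}
    (hgt : ∀ d, c < d → #{v | d ≤ m' v} = #{v | d ≤ m v})
    (hc : #{v | c ≤ m' v} < #{v | c ≤ m v}) :
    ∑ v, (m' v + 1 - c) < ∑ v, (m v + 1 - c) := by
  set B := ∑ v, (m v + m' v) + 1
  have hB (v : V) : m v + m' v ≤ ∑ v, (m v + m' v) :=
    single_le_sum (f := fun v => m v + m' v) (fun v _ => Nat.zero_le _) (mem_univ v)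
  rw [sum_add_one_tsub_eq_sum_card m (B := B) (fun v => by have := hB v; omega),
    sum_add_one_tsub_eq_sum_card m' (B := B) (fun v => by have := hB v; omega)]
  refine sum_lt_sum (fun i _ => ?_) ⟨0, by simp [B], by simpa using hc⟩
  rcases i.eq_zero_or_pos with rfl | hi
  · simpa using hc.le
  · exact (hgt (c + i) (by omega)).le

/-- On `S` the values of `m` are at least `c - 1`, and outside `S` they are below `c`, so it
suffices to compare the parts of `m` and `m'` above `c - 1`. -/
lemma sum_lt_sum_of_lex_superlevel {m m' : V → ℕ} {S : Finset V} {c : ℕ}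
    (hgt : ∀ d, c < d → #{v | d ≤ m' v} = #{v | d ≤ m v})
    (hc : #{v | c ≤ m' v} < #{v | c ≤ m v})
    (hS : ∀ v ∈ S, c ≤ m v + 1) (hsub : ∀ v, c ≤ m v → v ∈ S) :
    ∑ v ∈ S, m' v < ∑ v ∈ S, m v := by
  have htop : ∑ v ∈ S, (m v + 1 - c) = ∑ v, (m v + 1 - c) :=
    sum_subset (subset_univ S) fun v _ hv => by have := mt (hsub v) hv; omega
  suffices ∑ v ∈ S, (m' v + 1) < ∑ v ∈ S, (m v + 1) by
    simpa only [sum_add_distrib, add_lt_add_iff_right] using this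
  calc ∑ v ∈ S, (m' v + 1)
      ≤ ∑ v ∈ S, (c + (m' v + 1 - c)) := sum_le_sum fun v _ => by omega
    _ ≤ ∑ v ∈ S, c + ∑ v, (m' v + 1 - c) := by
      rw [sum_add_distrib]
      exact Nat.add_le_add_left (sum_le_sum_of_subset (subset_univ S)) _
    _ < ∑ v ∈ S, c + ∑ v, (m v + 1 - c) :=
      Nat.add_lt_add_left (sum_add_one_tsub_lt_of_lex hgt hc) _
    _ = ∑ v ∈ S, (m v + 1) := by
      rw [← htop, ← sum_add_distrib]
      exact sum_congr rfl fun v hv => by have := hS v hv; omega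

end SuperlevelSets

section Dipaths

variable {V E : Type*} {ends : E → V × V} {o : E → Bool}

lemma Reach.exists_isDipath {s t : V} (h : Reach ends o s t) : ∃ P, IsDipath ends o s t P := by
  induction h using Relation.ReflTransGen.head_induction_on with
  | refl => exact ⟨[], rfl⟩
  | head step _ ih =>
    obtain ⟨e, rfl, rfl⟩ := step
    obtain ⟨P, hP⟩ := ih
    exact ⟨e :: P, rfl, hP⟩

lemma IsDipath.exists_of_append {s t : V} {P Q : List E} (h : IsDipath ends o s t (P ++ Q)) :
    ∃ u, IsDipath ends o u t Q := by
  induction P generalizing s with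
  | nil => exact ⟨s, h⟩
  | cons e P ih => exact ih h.2

lemma IsDipath.exists_nodup {s t : V} {P : List E} (h : IsDipath ends o s t P) :
    ∃ Q : List E, Q.Nodup ∧ IsDipath ends o s t Q := by
  induction P generalizing s with
  | nil => exact ⟨[], List.nodup_nil, h⟩
  | cons e P ih =>
    obtain ⟨hs, hP⟩ := h
    obtain ⟨Q, hnd, hQ⟩ := ih hP
    by_cases he : e ∈ Q
    · -- the suffix of `Q` starting at `e` is already a walk from `otail e = s`
      obtain ⟨A, C, rfl⟩ := List.append_of_mem he
      obtain ⟨u, hu⟩ := hQ.exists_of_append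
      exact ⟨e :: C, hnd.sublist (List.sublist_append_right A _), hs, hu.2⟩
    · exact ⟨e :: Q, List.nodup_cons.mpr ⟨he, hnd⟩, hs, hQ⟩

lemma IsDipath.countP_otail_add [DecidableEq V] {s t : V} {P : List E}
    (h : IsDipath ends o s t P) (v : V) :
    P.countP (otail ends o · = v) + (if v = t then 1 else 0) =
      P.countP (ohead ends o · = v) + (if v = s then 1 else 0) := by
  induction P generalizing s with
  | nil => subst h; rfl
  | cons e P ih =>
    obtain ⟨rfl, hP⟩ := h
    have := ih hP
    simp only [List.countP_cons, decide_eq_true_eq] at this ⊢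
    grind

end Dipaths

section Reversal

variable {V E : Type*} [DecidableEq E] (ends : E → V × V)

def flipOn (F : Finset E) (o : E → Bool) (e : E) : Bool :=
  if e ∈ F then !o e else o e

lemma ohead_flipOn_of_mem {F : Finset E} {o : E → Bool} {e : E} (he : e ∈ F) :
    ohead ends (flipOn F o) e = otail ends o e := by
  cases h : o e <;> simp [ohead, otail, flipOn, he, h]

lemma ohead_flipOn_of_notMem {F : Finset E} {o : E → Bool} {e : E} (he : e ∉ F) :
    ohead ends (flipOn F o) e = ohead ends o e := by
  simp [ohead, flipOn, he]

lemma indeg_flipOn_add [Fintype E] [DecidableEq V] (F : Finset E) (o : E → Bool) (v : V) :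
    indeg ends (flipOn F o) v + #{e ∈ F | ohead ends o e = v} =
      indeg ends o v + #{e ∈ F | otail ends o e = v} := by
  have hflip : ∑ e ∈ F, (if ohead ends (flipOn F o) e = v then 1 else 0) =
      ∑ e ∈ F, if otail ends o e = v then 1 else 0 :=
    sum_congr rfl fun e he => by rw [ohead_flipOn_of_mem ends he]
  have hkeep : ∑ e ∈ Fᶜ, (if ohead ends (flipOn F o) e = v then 1 else 0) =
      ∑ e ∈ Fᶜ, if ohead ends o e = v then 1 else 0 :=
    sum_congr rfl fun e he => by rw [ohead_flipOn_of_notMem ends (mem_compl.mp he)]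
  simp only [indeg, card_filter, ← sum_add_sum_compl F]
  omega

end Reversal

lemma card_filter_toFinset_of_nodup {α : Type*} [DecidableEq α] {l : List α} (hl : l.Nodup)
    (p : α → Prop) [DecidablePred p] : #{a ∈ l.toFinset | p a} = l.countP (p ·) := by
  rw [List.countP_eq_length_filter, ← List.toFinset_card_of_nodup (hl.filter _)]
  congr 1
  ext a
  simp

lemma Reach.exists_indeg_transfer {V E : Type*} [Fintype E] [DecidableEq V]
    {ends : E → V × V} {o : E → Bool} {s t : V} (h : Reach ends o s t) :
    ∃ o' : E → Bool, ∀ v, indeg ends o' v + (if v = t then 1 else 0) =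
      indeg ends o v + (if v = s then 1 else 0) := by
  classical
  obtain ⟨P, hP⟩ := h.exists_isDipath
  obtain ⟨Q, hnd, hQ⟩ := hP.exists_nodup
  refine ⟨flipOn Q.toFinset o, fun v => ?_⟩
  have hflip := indeg_flipOn_add ends Q.toFinset o v
  have htel := hQ.countP_otail_add v
  rw [card_filter_toFinset_of_nodup hnd, card_filter_toFinset_of_nodup hnd] at hflip
  omega

section Cuts

variable {V E : Type*} [Fintype E] [DecidableEq V] (ends : E → V × V)

lemma sum_indeg_eq_card (o : E → Bool) (X : Finset V) :
    ∑ v ∈ X, indeg ends o v = #{e | ohead ends o e ∈ X} :=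
  sum_card_fiberwise_eq_card_filter _ _ _

lemma sum_indeg_eq_iG_add_inCut (o : E → Bool) (X : Finset V) :
    ∑ v ∈ X, indeg ends o v = iG ends X + inCut ends o X := by
  rw [sum_indeg_eq_card, iG, inCut, ← card_filter_add_card_filter_not (otail ends o · ∈ X),
    filter_filter, filter_filter]
  congr 1
  exact congrArg card (filter_congr fun e _ => by unfold ohead otail; split_ifs <;> tauto)

lemma iG_le_sum_indeg (o : E → Bool) (X : Finset V) :
    iG ends X ≤ ∑ v ∈ X, indeg ends o v := by
  rw [sum_indeg_eq_card]
  refine card_le_card (monotone_filter_right _ fun e _ he => ?_)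
  simp only [ohead]
  split_ifs <;> tauto

lemma inCut_eq_zero {o : E → Bool} {X : Finset V}
    (hX : ∀ e, ohead ends o e ∈ X → otail ends o e ∈ X) : inCut ends o X = 0 :=
  card_eq_zero.mpr (filter_eq_empty_iff.mpr fun e _ h => h.2 (hX e h.1))

end Cuts

theorem decmin_orientation_iff_no_improving_dipath_general {V E : Type*}
    [Fintype V] [Fintype E] [DecidableEq V]
    (ends : E → V × V) (o : E → Bool) :
    (∀ o' : E → Bool, decSeq (indeg ends o) ≤ decSeq (indeg ends o')) ↔
      ¬ ∃ s t : V, Reach ends o s t ∧ indeg ends o s + 2 ≤ indeg ends o t := by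
  classical
  constructor
  · rintro hmin ⟨s, t, hst, hgap⟩
    obtain ⟨o', ho'⟩ := hst.exists_indeg_transfer
    exact (hmin o').not_gt (decSeq_lt_of_transfer ho' hgap)
  · intro hno o'
    by_contra! hlt
    obtain ⟨c, hgt, hc⟩ := (decSeq_lt_decSeq_iff _ _).mp hlt
    set S : Finset V := {v | ∃ t, c ≤ indeg ends o t ∧ Reach ends o v t}
    have hclosed : inCut ends o S = 0 := inCut_eq_zero ends fun e he => by
      obtain ⟨t, ht, hreach⟩ := (mem_filter.mp he).2
      exact mem_filter.mpr ⟨mem_univ _, t, ht, .head ⟨e, rfl, rfl⟩ hreach⟩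
    have hS : ∀ v ∈ S, c ≤ indeg ends o v + 1 := fun v hv => by
      obtain ⟨t, ht, hreach⟩ := (mem_filter.mp hv).2
      by_contra! hlow
      exact hno ⟨v, t, hreach, by omega⟩
    have hsub : ∀ v, c ≤ indeg ends o v → v ∈ S := fun v hv =>
      mem_filter.mpr ⟨mem_univ _, v, hv, .refl⟩
    have hsum := sum_indeg_eq_iG_add_inCut ends o S
    have hiG := iG_le_sum_indeg ends o' S
    have hstrict := sum_lt_sum_of_lex_superlevel hgt hc hS hsub
    omega

/-- An orientation `D` of `G` has decreasingly minimal in-degree vector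
(among all orientations of `G`) iff there is no directed path in `D` from a node `s` to a
node `t` with `ρ_D(t) ≥ ρ_D(s) + 2`. -/
theorem decmin_orientation_iff_no_improving_dipath {V E : Type*}
    [Fintype V] [Fintype E] [DecidableEq V]
    (ends : E → V × V) (hloop : ∀ e, (ends e).1 ≠ (ends e).2) (o : E → Bool) :
    (∀ o' : E → Bool, decSeq (indeg ends o) ≤ decSeq (indeg ends o')) ↔
      ¬ ∃ s t : V, Reach ends o s t ∧ indeg ends o s + 2 ≤ indeg ends o t :=
  decmin_orientation_iff_no_improving_dipath_general ends o
end

section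
/- Among orientations of an undirected graph G=(V,E), an orientation D is decreasingly minimal (with respect to in-degree vectors) if and only if D minimizes Σ_{v∈V} ρ_D(v)² over all orientations of G. -/
/-!
Let `o` minimise `∑ ρ²` and let `o'` be another orientation with `ρ_{o'}(u) < ρ_o(u)`. Reversing,
one at a time, edges on which `o` and `o'` disagree, starting with one entering `u`, produces a
node `v` with `ρ_o(v) < ρ_{o'}(v)` and a common set of such edges whose reversal moves one unit of
in-degree from `u` to `v` in `o` and from `v` to `u` in `o'`. Minimality of `o` forces
`ρ_o(u) ≤ ρ_o(v) + 1`, hence `ρ_{o'}(u) + 1 ≤ ρ_{o'}(v)`: the modified `o'` is closer to `o` and its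
decreasingly sorted in-degree sequence is lexicographically no larger. Induction shows that `o` is
decreasingly minimal. Conversely, a decreasingly minimal orientation has the same in-degree
multiset as a square-sum minimiser, which is decreasingly minimal by the first part.
-/

open Finset

namespace Multiset

variable {α : Type*} [LinearOrder α]

def decSort (s : Multiset α) : List α := (s.sort (· ≤ ·)).reverse

@[simp]
theorem coe_decSort (s : Multiset α) : (decSort s : Multiset α) = s := by
  rw [decSort, coe_reverse, sort_eq]

@[simp]
theorem mem_decSort {a : α} {s : Multiset α} : a ∈ decSort s ↔ a ∈ s := by
  rw [← mem_coe, coe_decSort]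

theorem sortedGE_decSort (s : Multiset α) : (decSort s).SortedGE :=
  (List.sortedLE_iff_pairwise.2 (pairwise_sort s _)).reverse

theorem decSort_eq_of_sortedGE {s : Multiset α} {l : List α} (hl : l.SortedGE)
    (hs : (l : Multiset α) = s) : decSort s = l :=
  List.Perm.eq_of_sortedGE (sortedGE_decSort s) hl (coe_eq_coe.1 (by rw [coe_decSort, hs]))

theorem decSort_add {s t : Multiset α} (h : ∀ x ∈ s, ∀ y ∈ t, y ≤ x) :
    decSort (s + t) = decSort s ++ decSort t := by
  refine decSort_eq_of_sortedGE ?_ (by rw [← coe_add, coe_decSort, coe_decSort])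
  rw [List.sortedGE_iff_pairwise, List.pairwise_append]
  exact ⟨(sortedGE_decSort s).pairwise, (sortedGE_decSort t).pairwise,
    fun x hx y hy => h x (mem_decSort.1 hx) y (mem_decSort.1 hy)⟩

theorem decSort_cons {a : α} {s : Multiset α} (h : ∀ y ∈ s, y ≤ a) :
    decSort (a ::ₘ s) = a :: decSort s := by
  refine decSort_eq_of_sortedGE ?_ (by rw [← cons_coe, coe_decSort])
  rw [List.sortedGE_iff_pairwise, List.pairwise_cons]
  exact ⟨fun y hy => h y (mem_decSort.1 hy), (sortedGE_decSort s).pairwise⟩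

theorem decSort_lt_cons {a : α} {s t : Multiset α} (hs : s ≠ 0) (hsa : ∀ x ∈ s, x < a)
    (hta : ∀ y ∈ t, y ≤ a) : decSort s < decSort (a ::ₘ t) := by
  obtain ⟨x, l, hxl⟩ := List.exists_cons_of_ne_nil (l := decSort s)
    fun h => hs (by rw [← coe_decSort s, h, coe_nil])
  rw [decSort_cons hta, hxl]
  exact List.Lex.rel (hsa x (mem_decSort.1 (by simp [hxl])))

theorem decSort_transfer_le {a b : ℕ} (hba : b + 1 ≤ a) (t : Multiset ℕ) :
    decSort ((b + 1) ::ₘ (a - 1) ::ₘ t) ≤ decSort (b ::ₘ a ::ₘ t) := by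
  rw [cons_swap b]
  rcases hba.eq_or_lt with rfl | hba
  · rw [Nat.add_sub_cancel, cons_swap]
  set hi := t.filter (fun x => a ≤ x)
  set lo := t.filter (fun x => ¬ a ≤ x)
  have hhi : ∀ x ∈ hi, a ≤ x := fun x hx => (mem_filter.1 hx).2
  have hlo : ∀ x ∈ lo, x < a := fun x hx => not_le.1 (mem_filter.1 hx).2
  have hlt : ∀ y ∈ (b + 1) ::ₘ (a - 1) ::ₘ lo, y < a := by
    simp only [mem_cons]
    rintro y (rfl | rfl | hy) <;> first | omega | exact hlo y hy
  have hle : ∀ y ∈ b ::ₘ lo, y ≤ a := by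
    simp only [mem_cons]
    rintro y (rfl | hy) <;> first | omega | exact (hlo y hy).le
  have hle' : ∀ y ∈ a ::ₘ b ::ₘ lo, y ≤ a := fun y hy =>
    (mem_cons.1 hy).elim le_of_eq (hle y)
  rw [← filter_add_not (fun x => a ≤ x) t, ← add_cons, ← add_cons, ← add_cons, ← add_cons,
    decSort_add fun x hx y hy => (hlt y hy).le.trans (hhi x hx),
    decSort_add fun x hx y hy => (hle' y hy).trans (hhi x hx)]
  exact (List.append_left_lt (decSort_lt_cons cons_ne_zero hlt hle)).le

end Multiset

section Transfer

variable {V : Type*}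

theorem apply_of_add_single_eq [DecidableEq V] {m m₁ : V → ℕ} {u v : V}
    (h : m₁ + Pi.single u 1 = m + Pi.single v 1) (x : V) :
    m₁ x + (if x = u then 1 else 0) = m x + (if x = v then 1 else 0) := by
  simpa [Pi.single_apply] using congrFun h x

variable [Fintype V]

theorem decSeq_eq_decSort (m : V → ℕ) : decSeq m = (univ.val.map m).decSort := rfl

theorem coe_decSeq (m : V → ℕ) : (decSeq m : Multiset ℕ) = univ.val.map m :=
  Multiset.coe_decSort _

theorem sum_comp_eq_of_decSeq_eq {M : Type*} [AddCommMonoid M] (f : ℕ → M) {m m' : V → ℕ}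
    (h : decSeq m = decSeq m') : ∑ v, f (m v) = ∑ v, f (m' v) := by
  have hmap : univ.val.map m = univ.val.map m' := by
    rw [← coe_decSeq, h, coe_decSeq]
  have hsum (g : V → ℕ) : ∑ v, f (g v) = ((univ.val.map g).map f).sum := by
    rw [Multiset.map_map, Finset.sum_map_val]
    rfl
  rw [hsum, hsum, hmap]

variable [DecidableEq V]

theorem decSeq_le_of_transfer {m m' : V → ℕ} {u v : V}
    (h : m' + Pi.single v 1 = m + Pi.single u 1) (huv : m u + 1 ≤ m v) :
    decSeq m' ≤ decSeq m := by
  have hne : u ≠ v := by rintro rfl; omega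
  have hu : m' u = m u + 1 := by
    have := apply_of_add_single_eq h u
    rw [if_neg hne, if_pos rfl] at this
    omega
  have hv : m' v = m v - 1 := by
    have := apply_of_add_single_eq h v
    rw [if_pos rfl, if_neg hne.symm] at this
    omega
  have hrest : ∀ w ∈ ((univ.erase u).erase v).val, m' w = m w := by
    intro w hw
    obtain ⟨hwv, hwu, -⟩ := by simpa only [Finset.mem_val, Finset.mem_erase] using hw
    have := apply_of_add_single_eq h w
    rw [if_neg hwu, if_neg hwv] at this
    omega
  have hsplit : (univ : Finset V).val = u ::ₘ v ::ₘ ((univ.erase u).erase v).val := by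
    have hv : v ∈ (univ.erase u).val := Finset.mem_erase.2 ⟨hne.symm, mem_univ v⟩
    rw [Finset.erase_val, Multiset.cons_erase hv, Finset.erase_val,
      Multiset.cons_erase (Finset.mem_univ_val u)]
  rw [decSeq_eq_decSort, decSeq_eq_decSort, hsplit, Multiset.map_cons, Multiset.map_cons,
    Multiset.map_cons, Multiset.map_cons, Multiset.map_congr rfl hrest, hu, hv]
  exact Multiset.decSort_transfer_le huv _

theorem sum_sq_add_single (m : V → ℕ) (u : V) :
    ∑ w, (m + Pi.single u 1 : V → ℕ) w ^ 2 = ∑ w, m w ^ 2 + 2 * m u + 1 := by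
  simp [add_sq, Finset.sum_add_distrib, Pi.single_apply]

theorem le_add_one_of_sum_sq_le {m m₁ : V → ℕ} {u v : V}
    (h : m₁ + Pi.single u 1 = m + Pi.single v 1) (hle : ∑ w, m w ^ 2 ≤ ∑ w, m₁ w ^ 2) :
    m u ≤ m v + 1 := by
  have hsq : ∑ w, m₁ w ^ 2 + 2 * m₁ u = ∑ w, m w ^ 2 + 2 * m v := by
    have := sum_sq_add_single m₁ u
    rw [h, sum_sq_add_single] at this
    omega
  have hu : m u ≤ m₁ u + 1 := by
    have := apply_of_add_single_eq h u
    split_ifs at this <;> omega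
  omega

theorem sum_tsub_lt_of_transfer {m m' m₁ : V → ℕ} {u v : V}
    (h : m₁ + Pi.single v 1 = m' + Pi.single u 1) (hu : m' u < m u) (hv : m v < m' v) :
    ∑ w, (m w - m₁ w) < ∑ w, (m w - m' w) := by
  have hne : u ≠ v := by rintro rfl; omega
  refine Finset.sum_lt_sum (fun w _ => ?_) ⟨u, mem_univ u, ?_⟩
  · have := apply_of_add_single_eq h w
    split_ifs at this <;> subst_vars <;> omega
  · have := apply_of_add_single_eq h u
    rw [if_pos rfl, if_neg hne] at this
    omega

end Transfer

section Orientation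

variable {V E : Type*} (ends : E → V × V)

theorem sum_indeg [Fintype V] [Fintype E] [DecidableEq V] (o : E → Bool) :
    ∑ v, indeg ends o v = Fintype.card E := by
  rw [← Finset.card_univ, Finset.card_eq_sum_card_fiberwise (fun e _ => mem_univ (ohead ends o e))]
  rfl

theorem exists_ohead_eq_of_indeg_lt [Fintype E] [DecidableEq V] {o o' : E → Bool} {u : V}
    (h : indeg ends o' u < indeg ends o u) : ∃ e, o e ≠ o' e ∧ ohead ends o e = u := by
  by_contra! hcon
  refine h.not_ge (Finset.card_le_card fun e he => ?_)
  rw [Finset.mem_filter] at he ⊢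
  have hoe : o e = o' e := by_contra fun hne => hcon e hne he.2
  rw [← he.2, ohead, ohead, hoe]
  exact ⟨he.1, rfl⟩

def diffEdges [Fintype E] (o o' : E → Bool) : Finset E := univ.filter fun e => o e ≠ o' e

variable [DecidableEq E]

def reverseOn (F : Finset E) (o : E → Bool) : E → Bool := fun e => if e ∈ F then !o e else o e

theorem reverseOn_insert {F : Finset E} {e : E} (he : e ∉ F) (o : E → Bool) :
    reverseOn (insert e F) o = reverseOn F (reverseOn {e} o) := by
  funext f
  by_cases hfe : f = e
  · subst hfe; simp [reverseOn, he]
  · simp [reverseOn, hfe]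

theorem ohead_reverseOn_of_mem {F : Finset E} {e : E} (he : e ∈ F) (o : E → Bool) :
    ohead ends (reverseOn F o) e = otail ends o e := by
  cases h : o e <;> simp [ohead, otail, reverseOn, he, h]

theorem ohead_reverseOn_of_notMem {F : Finset E} {e : E} (he : e ∉ F) (o : E → Bool) :
    ohead ends (reverseOn F o) e = ohead ends o e := by
  simp [ohead, reverseOn, he]

variable [Fintype E]

theorem diffEdges_reverseOn_singleton {o o' : E → Bool} {e : E} (he : e ∈ diffEdges o o') :
    diffEdges (reverseOn {e} o) o' = (diffEdges o o').erase e := by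
  ext f
  by_cases hfe : f = e
  · subst hfe
    simp only [diffEdges, Finset.mem_filter, mem_univ, true_and] at he
    simp [diffEdges, reverseOn, Bool.eq_not.2 he]
  · simp [diffEdges, reverseOn, hfe]

variable [DecidableEq V]

theorem indeg_reverseOn_singleton (o : E → Bool) (e : E) :
    indeg ends (reverseOn {e} o) + Pi.single (ohead ends o e) 1
      = indeg ends o + Pi.single (otail ends o e) 1 := by
  funext w
  have hrest : ∑ f ∈ univ.erase e, (if ohead ends (reverseOn {e} o) f = w then 1 else 0)
      = ∑ f ∈ univ.erase e, (if ohead ends o f = w then 1 else 0) :=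
    Finset.sum_congr rfl fun f hf => by
      rw [ohead_reverseOn_of_notMem ends (by simpa using Finset.ne_of_mem_erase hf)]
  simp only [Pi.add_apply, Pi.single_apply, @eq_comm _ w, indeg, Finset.card_filter]
  rw [← Finset.add_sum_erase _ _ (mem_univ e), ← Finset.add_sum_erase _ _ (mem_univ e), hrest,
    ohead_reverseOn_of_mem ends (Finset.mem_singleton_self e)]
  split_ifs <;> omega

theorem indeg_reverseOn_add {F : Finset E} {o o' : E → Bool} (hF : F ⊆ diffEdges o o') :
    indeg ends (reverseOn F o) + indeg ends (reverseOn F o') = indeg ends o + indeg ends o' := by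
  funext w
  simp only [Pi.add_apply, indeg, Finset.card_filter, ← Finset.sum_add_distrib]
  refine Finset.sum_congr rfl fun e _ => ?_
  by_cases he : e ∈ F
  · have hne : o e ≠ o' e := by simpa [diffEdges] using hF he
    have h₁ : reverseOn F o e = o' e := by simp [reverseOn, he, Bool.eq_not.2 hne]
    have h₂ : reverseOn F o' e = o e := by simp [reverseOn, he, Bool.eq_not.2 hne.symm]
    rw [ohead, ohead, h₁, h₂, add_comm]
    rfl
  · rw [ohead_reverseOn_of_notMem ends he, ohead_reverseOn_of_notMem ends he]

end Orientation

section Exchange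

variable {V E : Type*} [Fintype E] [DecidableEq V] [DecidableEq E] (ends : E → V × V)

theorem exists_exchange {o o' : E → Bool} {u : V} (hu : indeg ends o' u < indeg ends o u) :
    ∃ v, indeg ends o v < indeg ends o' v ∧ ∃ F ⊆ diffEdges o o',
      indeg ends (reverseOn F o) + Pi.single u 1 = indeg ends o + Pi.single v 1 := by
  induction hn : (diffEdges o o').card generalizing o u with
  | zero =>
    obtain ⟨e, he, -⟩ := exists_ohead_eq_of_indeg_lt ends hu
    exact absurd hn (Finset.card_ne_zero_of_mem (by simpa [diffEdges] using he))
  | succ n ih =>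
    -- Reverse a disagreeing edge `e` entering `u`: either its tail `w` can serve as `v`, or `w`
    -- is now in excess and there is one disagreeing edge fewer.
    obtain ⟨e, he, hue⟩ := exists_ohead_eq_of_indeg_lt ends hu
    have he' : e ∈ diffEdges o o' := by simpa [diffEdges] using he
    have hflip := indeg_reverseOn_singleton ends o e
    generalize otail ends o e = w at hflip
    rw [hue] at hflip
    by_cases hw : indeg ends o w < indeg ends o' w
    · exact ⟨w, hw, {e}, by simpa using he', hflip⟩
    have hw' : indeg ends o' w < indeg ends (reverseOn {e} o) w := by
      have := apply_of_add_single_eq hflip w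
      rw [if_pos rfl] at this
      split_ifs at this <;> subst_vars <;> omega
    have hcard : (diffEdges (reverseOn {e} o) o').card = n := by
      rw [diffEdges_reverseOn_singleton he', Finset.card_erase_of_mem he', hn, Nat.add_sub_cancel]
    obtain ⟨v, hv, F, hF, hFind⟩ := ih hw' hcard
    have heF : e ∉ F := fun h => by simpa [diffEdges_reverseOn_singleton he'] using hF h
    refine ⟨v, ?_, insert e F, ?_, ?_⟩
    · have := apply_of_add_single_eq hflip v
      split_ifs at this <;> subst_vars <;> omega
    · refine Finset.insert_subset he' (hF.trans ?_)
      rw [diffEdges_reverseOn_singleton he']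
      exact Finset.erase_subset _ _
    · rw [reverseOn_insert heF]
      funext x
      have h₁ := congrFun hflip x
      have h₂ := congrFun hFind x
      simp only [Pi.add_apply] at h₁ h₂ ⊢
      omega

end Exchange

theorem decSeq_indeg_le_of_sum_sq_le {V E : Type*} [Fintype V] [Fintype E] [DecidableEq V]
    (ends : E → V × V) {o : E → Bool}
    (hmin : ∀ o' : E → Bool, ∑ v, indeg ends o v ^ 2 ≤ ∑ v, indeg ends o' v ^ 2) (o' : E → Bool) :
    decSeq (indeg ends o) ≤ decSeq (indeg ends o') := by
  classical
  induction hn : ∑ w, (indeg ends o w - indeg ends o' w) using Nat.strong_induction_on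
    generalizing o' with
  | _ n ih =>
  by_cases hu : ∃ u, indeg ends o' u < indeg ends o u
  swap
  · push Not at hu
    have heq := (Finset.sum_eq_sum_iff_of_le fun w _ => hu w).1 (by rw [sum_indeg, sum_indeg])
    rw [funext fun w => heq w (mem_univ w)]
  obtain ⟨u, hu⟩ := hu
  obtain ⟨v, hv, F, hF, hmove⟩ := exists_exchange ends hu
  have hmove' : indeg ends (reverseOn F o') + Pi.single v 1 = indeg ends o' + Pi.single u 1 := by
    funext x
    have h₁ := congrFun hmove x
    have h₂ := congrFun (indeg_reverseOn_add ends hF) x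
    simp only [Pi.add_apply] at h₁ h₂ ⊢
    omega
  have huv : indeg ends o u ≤ indeg ends o v + 1 := le_add_one_of_sum_sq_le hmove (hmin _)
  calc decSeq (indeg ends o) ≤ decSeq (indeg ends (reverseOn F o')) :=
        ih _ (hn ▸ sum_tsub_lt_of_transfer hmove' hu hv) _ rfl
    _ ≤ decSeq (indeg ends o') := decSeq_le_of_transfer hmove' (by omega)

theorem decmin_iff_squaresum_minimizer_general {V E : Type*} [Fintype V] [Fintype E] [DecidableEq V]
    (ends : E → V × V) (o : E → Bool) :
    (∀ o' : E → Bool, decSeq (indeg ends o) ≤ decSeq (indeg ends o')) ↔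
      (∀ o' : E → Bool, ∑ v, (indeg ends o v) ^ 2 ≤ ∑ v, (indeg ends o' v) ^ 2) := by
  refine ⟨fun hdec o' => ?_, decSeq_indeg_le_of_sum_sq_le ends⟩
  obtain ⟨o₀, ho₀⟩ := Finite.exists_min fun o => ∑ v, indeg ends o v ^ 2
  have heq : decSeq (indeg ends o) = decSeq (indeg ends o₀) :=
    le_antisymm (hdec o₀) (decSeq_indeg_le_of_sum_sq_le ends ho₀ o)
  rw [sum_comp_eq_of_decSeq_eq (· ^ 2) heq]
  exact ho₀ o'

/-- An orientation `D` of `G` is decreasingly minimal (w.r.t. in-degree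
vectors) iff it minimizes the sum of squared in-degrees over all orientations. -/
theorem decmin_iff_squaresum_minimizer {V E : Type*} [Fintype V] [Fintype E] [DecidableEq V]
    (ends : E → V × V) (hloop : ∀ e, (ends e).1 ≠ (ends e).2) (o : E → Bool) :
    (∀ o' : E → Bool, decSeq (indeg ends o) ≤ decSeq (indeg ends o')) ↔
      (∀ o' : E → Bool, ∑ v, (indeg ends o v) ^ 2 ≤ ∑ v, (indeg ends o' v) ^ 2) :=
  decmin_iff_squaresum_minimizer_general ends o
end
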